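/- Let q be a prime power and s, n, k positive integers with k < n. Let C ⊆ 𝔽_{q^s}^n be a k-dimensional 𝔽_{q^s}-linear code with information set I ⊆ {1,…,n}, and let Γ = {γ_1,…,γ_s} be a basis of 𝔽_{q^s} over 𝔽_q with V = span_{𝔽_q}(γ_1,…,γ_v) and W = span_{𝔽_q}(γ_{v+1},…,γ_s). Let φ_{Ī} denote extension by zeros on the coordinates in I. Then, viewing 𝔽_{q^s}^n as an 𝔽_q-vector space, 𝔽_{q^s}^n = C ⊕ φ_{Ī}(V^{n-k}) ⊕ φ_{Ī}(W^{n-k}) as a direct sum of 𝔽_q-subspaces. -/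

import Mathlib

/-!
Since `I` is an information set, restriction to `I` maps `C` isomorphically onto `K^I`, so `C` is
a complement of the kernel of restriction, the vectors vanishing on `I`. As `K = V ⊕ W`, and
extending by zero outside `I` commutes with `⊕` coordinatewise, that kernel is `φ_Ī(V) ⊕ φ_Ī(W)`.
-/

open Submodule LinearMap

theorem Submodule.isCompl_ker_of_bijective_comp_subtype {R M N : Type*} [Ring R] [AddCommGroup M]
    [Module R M] [AddCommGroup N] [Module R N] {p : Submodule R M} {f : M →ₗ[R] N}
    (hf : Function.Bijective (f ∘ₗ p.subtype)) : IsCompl p (ker f) := by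
  let e := LinearEquiv.ofBijective (f ∘ₗ p.subtype) hf
  rw [← LinearEquiv.ker_comp e.symm f]
  exact isCompl_of_proj (f := e.symm.toLinearMap ∘ₗ f) e.symm_apply_apply

namespace Submodule

variable {R M ι : Type*} [Semiring R] [AddCommMonoid M] [Module R M]

theorem pi_inf_pi (I : Set ι) (p q : ι → Submodule R M) :
    pi I p ⊓ pi I q = pi I (p ⊓ q) :=
  SetLike.coe_injective (Set.pi_inter_distrib ..).symm

theorem pi_univ_sup_pi_univ [Finite ι] (p q : ι → Submodule R M) :
    pi Set.univ p ⊔ pi Set.univ q = pi Set.univ (p ⊔ q) := by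
  classical
  simp only [← iSup_map_single, Pi.sup_apply, map_sup, iSup_sup_eq]

variable [DecidableEq ι]

/-- The paper's `φ_Ī(p^{n-k})`. -/
def extendByZero (I : Finset ι) (p : Submodule R M) : Submodule R (ι → M) :=
  pi Set.univ fun i => if i ∈ I then ⊥ else p

variable (I : Finset ι)

theorem extendByZero_inf (p q : Submodule R M) :
    extendByZero I p ⊓ extendByZero I q = extendByZero I (p ⊓ q) := by
  rw [extendByZero, extendByZero, pi_inf_pi]
  congr with i : 1
  exact (apply_ite₂ (· ⊓ ·) _ _ _ _ _).trans (by rw [inf_idem])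

theorem extendByZero_sup [Finite ι] (p q : Submodule R M) :
    extendByZero I p ⊔ extendByZero I q = extendByZero I (p ⊔ q) := by
  rw [extendByZero, extendByZero, pi_univ_sup_pi_univ]
  congr with i : 1
  exact (apply_ite₂ (· ⊔ ·) _ _ _ _ _).trans (by rw [sup_idem])

theorem extendByZero_bot : extendByZero I (⊥ : Submodule R M) = ⊥ := by
  simp [extendByZero]

theorem extendByZero_top :
    extendByZero I (⊤ : Submodule R M) = ker (funLeft R M ((↑) : I → ι)) := by
  ext x
  simp only [extendByZero, mem_pi, Set.mem_univ, true_implies, mem_ker, funext_iff,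
    funLeft_apply, Pi.zero_apply, Subtype.forall]
  refine forall_congr' fun i => ?_
  by_cases hi : i ∈ I <;> simp [hi]

end Submodule

theorem Module.Basis.isCompl_span_image_compl {R M ι : Type*} [Semiring R] [AddCommMonoid M]
    [Module R M] (b : Module.Basis ι R M) (S : Set ι) :
    IsCompl (span R (b '' S)) (span R (b '' Sᶜ)) :=
  b.linearIndependent.isCompl_span_image b.span_eq isCompl_compl

theorem stmt_0_general (s n v : ℕ)
    (F K : Type) [Field F] [Field K] [Algebra F K]
    (γ : Module.Basis (Fin s) F K)
    (C : Submodule K (Fin n → K))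
    (I : Finset (Fin n))
    (hinfo : Function.Bijective fun (c : C) (i : I) => (c : Fin n → K) i.1)
    (V W : Submodule F K)
    (hV : V = Submodule.span F (⇑γ '' {i : Fin s | (i : ℕ) < v}))
    (hW : W = Submodule.span F (⇑γ '' {i : Fin s | v ≤ (i : ℕ)}))
    (VE WE : Submodule F (Fin n → K))
    (hVE : VE = Submodule.pi Set.univ
      (fun i => if i ∈ I then (⊥ : Submodule F K) else V))
    (hWE : WE = Submodule.pi Set.univ
      (fun i => if i ∈ I then (⊥ : Submodule F K) else W)) :
    (Submodule.restrictScalars F C) ⊓ (VE ⊔ WE) = ⊥ ∧ VE ⊓ WE = ⊥ ∧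
      (Submodule.restrictScalars F C) ⊔ VE ⊔ WE = ⊤ := by
  obtain rfl : VE = extendByZero I V := hVE
  obtain rfl : WE = extendByZero I W := hWE
  have hVW : IsCompl V W := by
    have hcompl : {i : Fin s | v ≤ (i : ℕ)} = {i : Fin s | (i : ℕ) < v}ᶜ := by
      ext i
      simp
    rw [hV, hW, hcompl]
    exact γ.isCompl_span_image_compl _
  have hE : extendByZero I V ⊔ extendByZero I W = ker (funLeft F K ((↑) : I → Fin n)) := by
    rw [extendByZero_sup, hVW.sup_eq_top, extendByZero_top]
  have hC : IsCompl (C.restrictScalars F) (ker (funLeft F K ((↑) : I → Fin n))) :=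
    isCompl_ker_of_bijective_comp_subtype hinfo
  refine ⟨hE ▸ hC.inf_eq_bot, ?_, ?_⟩
  · rw [extendByZero_inf, hVW.inf_eq_bot, extendByZero_bot]
  · rw [sup_assoc, hE, hC.sup_eq_top]

/-- Direct sum decomposition 𝔽_{q^s}^n = C ⊕ φ_Ī(V^{n-k}) ⊕ φ_Ī(W^{n-k}) over 𝔽_q. -/
theorem stmt_0 (q s n k v : ℕ) (hq : IsPrimePow q) (hs : 0 < s) (hn : 0 < n)
    (hk : 0 < k) (hkn : k < n) (hv : v ≤ s)
    (F K : Type) [Field F] [Fintype F] [Field K] [Algebra F K]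
    (hF : Fintype.card F = q)
    (γ : Module.Basis (Fin s) F K)
    (C : Submodule K (Fin n → K)) (hCdim : Module.finrank K C = k)
    (I : Finset (Fin n)) (hIcard : I.card = k)
    (hinfo : Function.Bijective fun (c : C) (i : I) => (c : Fin n → K) i.1)
    (V W : Submodule F K)
    (hV : V = Submodule.span F (⇑γ '' {i : Fin s | (i : ℕ) < v}))
    (hW : W = Submodule.span F (⇑γ '' {i : Fin s | v ≤ (i : ℕ)}))
    (VE WE : Submodule F (Fin n → K))
    (hVE : VE = Submodule.pi Set.univ
      (fun i => if i ∈ I then (⊥ : Submodule F K) else V))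
    (hWE : WE = Submodule.pi Set.univ
      (fun i => if i ∈ I then (⊥ : Submodule F K) else W)) :
    (Submodule.restrictScalars F C) ⊓ (VE ⊔ WE) = ⊥ ∧ VE ⊓ WE = ⊥ ∧
      (Submodule.restrictScalars F C) ⊔ VE ⊔ WE = ⊤ :=
  stmt_0_general s n v F K γ C I hinfo V W hV hW VE WE hVE hWE
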